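/- arXiv:2301.06589 — 8 statements merged into one kernel-verified Lean document; each statement's English description precedes it below -/
import Mathlib

section
/- The map f : B_{ℓ²} → B_{ℓ²} defined by f(x₁, x₂, …) = (√(1 − ‖x‖²), x₁, x₂, …) on the closed unit ball of ℓ² is noncontractive (i.e. ‖f(x) − f(y)‖ ≥ ‖x − y‖ for all x, y in the ball) but is not an isometric embedding; hence the closed unit ball of ℓ² is not strongly plastic. -/
open scoped ENNReal
open Metric

noncomputable section

abbrev L2 := lp (fun _ : ℕ => ℝ) 2

lemma two_toReal : (2 : ℝ≥0∞).toReal = 2 := by simp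
lemma two_toReal_pos : (0:ℝ) < (2 : ℝ≥0∞).toReal := by simp [two_toReal]

lemma summable_sq (x : L2) : Summable (fun n => (x n) ^ 2) := by
  have := (memℓp_gen_iff two_toReal_pos).1 (lp.memℓp x)
  simpa [two_toReal, Real.rpow_natCast, sq_abs] using this

lemma norm_sq_eq (x : L2) : ‖x‖ ^ 2 = ∑' n, (x n) ^ 2 := by
  have := lp.norm_rpow_eq_tsum two_toReal_pos x
  simpa [two_toReal, Real.rpow_natCast, sq_abs] using this

def shiftFun (c : ℝ) (x : ℕ → ℝ) : ℕ → ℝ := fun n => Nat.casesOn n c x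

lemma shiftFun_summable (c : ℝ) (x : L2) :
    Summable (fun n => (shiftFun c x n) ^ 2) := by
  rw [← summable_nat_add_iff 1]
  exact summable_sq x

lemma shift_mem (c : ℝ) (x : L2) : Memℓp (shiftFun c x) 2 := by
  apply memℓp_gen
  have := shiftFun_summable c x
  simpa [two_toReal, Real.rpow_natCast, sq_abs] using this

def shift (c : ℝ) (x : L2) : L2 := ⟨shiftFun c x, shift_mem c x⟩

@[simp] lemma shift_apply_zero (c : ℝ) (x : L2) : (shift c x : ℕ → ℝ) 0 = c := rfl
@[simp] lemma shift_apply_succ (c : ℝ) (x : L2) (n : ℕ) :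
    (shift c x : ℕ → ℝ) (n + 1) = x n := rfl

lemma norm_sq_shift (c : ℝ) (x : L2) : ‖shift c x‖ ^ 2 = c ^ 2 + ‖x‖ ^ 2 := by
  rw [norm_sq_eq, norm_sq_eq x]
  have : (fun n => ((shift c x : ℕ → ℝ) n) ^ 2) = fun n => (shiftFun c x n)^2 := rfl
  rw [this, Summable.tsum_eq_zero_add (shiftFun_summable c x)]
  rfl

lemma shift_sub (c d : ℝ) (x y : L2) : shift c x - shift d y = shift (c - d) (x - y) := by
  apply lp.ext
  funext n
  rw [lp.coeFn_sub]
  cases n <;> simp [shift, shiftFun, lp.coeFn_sub]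

end

noncomputable section
open Metric

lemma mem_ball_iff (x : L2) : x ∈ closedBall (0 : L2) 1 ↔ ‖x‖ ≤ 1 := by
  simp [mem_closedBall, dist_zero_right]

def cc (x : L2) : ℝ := Real.sqrt (1 - ‖x‖ ^ 2)

lemma cc_sq {x : L2} (hx : ‖x‖ ≤ 1) : (cc x) ^ 2 = 1 - ‖x‖ ^ 2 := by
  rw [cc, Real.sq_sqrt]
  nlinarith [norm_nonneg x]

lemma shift_mem_ball {x : L2} (hx : ‖x‖ ≤ 1) : shift (cc x) x ∈ closedBall (0 : L2) 1 := by
  rw [mem_ball_iff]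
  have h : ‖shift (cc x) x‖ ^ 2 = 1 := by rw [norm_sq_shift, cc_sq hx]; ring
  nlinarith [norm_nonneg (shift (cc x) x)]

theorem not_strongly_plastic_ball_l2 :
    ∃ f : closedBall (0 : lp (fun _ : ℕ => ℝ) 2) 1 → closedBall (0 : lp (fun _ : ℕ => ℝ) 2) 1,
      (∀ x : closedBall (0 : lp (fun _ : ℕ => ℝ) 2) 1,
        ((f x : lp (fun _ : ℕ => ℝ) 2) 0 = Real.sqrt (1 - ‖(x : lp (fun _ : ℕ => ℝ) 2)‖ ^ 2)) ∧
        ∀ n : ℕ, (f x : lp (fun _ : ℕ => ℝ) 2) (n + 1) = (x : lp (fun _ : ℕ => ℝ) 2) n) ∧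
      (∀ x y : closedBall (0 : lp (fun _ : ℕ => ℝ) 2) 1, dist x y ≤ dist (f x) (f y)) ∧
      ¬ (∀ x y : closedBall (0 : lp (fun _ : ℕ => ℝ) 2) 1, dist (f x) (f y) = dist x y) := by
  refine ⟨fun x => ⟨shift (cc x) x, shift_mem_ball ((mem_ball_iff _).1 x.2)⟩, fun x => ⟨rfl, fun n => rfl⟩, ?_, ?_⟩
  · intro x y
    rw [Subtype.dist_eq, Subtype.dist_eq, dist_eq_norm, dist_eq_norm]
    have h : ‖shift (cc x) (x:L2) - shift (cc y) (y:L2)‖ ^ 2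
        = (cc x - cc y) ^ 2 + ‖(x:L2) - (y:L2)‖ ^ 2 := by
      rw [shift_sub, norm_sq_shift]
    have h2 : ‖(x:L2) - (y:L2)‖ ^ 2 ≤ ‖shift (cc x) (x:L2) - shift (cc y) (y:L2)‖ ^ 2 := by
      nlinarith [sq_nonneg (cc x - cc y)]
    have := Real.sqrt_le_sqrt h2
    rwa [Real.sqrt_sq (norm_nonneg _), Real.sqrt_sq (norm_nonneg _)] at this
  · intro h
    set e : L2 := lp.single 2 0 (1:ℝ) with he
    have hne : ‖e‖ = 1 := by
      rw [he]
      simpa using lp.norm_single (E := fun _ : ℕ => ℝ) two_toReal_pos (fun _ => (1:ℝ)) 0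
    have hx0 : (0 : L2) ∈ closedBall (0:L2) 1 := by simp [mem_ball_iff]
    have hxe : e ∈ closedBall (0:L2) 1 := by rw [mem_ball_iff, hne]
    have hd := h ⟨0, hx0⟩ ⟨e, hxe⟩
    rw [Subtype.dist_eq, Subtype.dist_eq, dist_eq_norm, dist_eq_norm] at hd
    simp only at hd
    have hsq : ‖shift (cc 0) (0:L2) - shift (cc e) e‖ ^ 2
        = (cc 0 - cc e) ^ 2 + ‖(0:L2) - e‖ ^ 2 := by rw [shift_sub, norm_sq_shift]
    have hc0 : cc (0:L2) = 1 := by simp [cc]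
    have hce : cc e = 0 := by simp [cc, hne]
    have : ‖shift (cc 0) (0:L2) - shift (cc e) e‖ ^ 2 = 2 := by
      rw [hsq, hc0, hce, zero_sub, norm_neg, hne]; norm_num
    rw [hd] at this
    rw [zero_sub, norm_neg, hne] at this
    norm_num at this
end
end

section
/- Let X and Y be finite metric spaces with |X| = |Y| = N ≥ 2 and σ(Y) ≤ σ(X). Fix ε > 0 and set δ = ε · (N(N−1)/2 − 1)^{-1}. Then for every bijection f : X → Y, if there exist x, y ∈ X with d(f(x), f(y)) > d(x, y) + ε, then there exist x̃, ỹ ∈ X with d(f(x̃), f(ỹ)) < d(x̃, ỹ) − δ. -/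
theorem uniform_plasticity_finite_pairs
    (X Y : Type*) [MetricSpace X] [MetricSpace Y] [Fintype X] [Fintype Y] (N : ℕ)
    (hN : 2 ≤ N) (hX : Fintype.card X = N) (hY : Fintype.card Y = N)
    (hσ : ∑ a : Y, ∑ b : Y, dist a b ≤ ∑ a : X, ∑ b : X, dist a b)
    (ε : ℝ) (hε : 0 < ε)
    (δ : ℝ) (hδ : δ = ε * ((N : ℝ) * (N - 1) / 2 - 1)⁻¹)
    (f : X → Y) (hbij : Function.Bijective f)
    (hex : ∃ x y : X, dist (f x) (f y) > dist x y + ε) :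
    ∃ x y : X, dist (f x) (f y) < dist x y - δ := by
  classical
  by_contra hcon
  push_neg at hcon
  obtain ⟨x, y, hxy⟩ := hex
  have hxny : x ≠ y := by
    intro h
    subst h
    simp only [dist_self] at hxy
    linarith [dist_nonneg (x := x) (y := x)]
  have hN2 : (2:ℝ) ≤ (N:ℝ) := by exact_mod_cast hN
  set c : ℝ := (N : ℝ) * ((N:ℝ) - 1) / 2 - 1 with hc
  have hc0 : 0 ≤ c := by
    have h := mul_nonneg (by linarith : (0:ℝ) ≤ (N:ℝ)-2) (by linarith : (0:ℝ) ≤ (N:ℝ)+1)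
    rw [hc]; nlinarith
  have hδ0 : 0 ≤ δ := by
    rw [hδ]
    exact mul_nonneg hε.le (inv_nonneg.mpr hc0)
  have hkey : 2 * c * δ ≤ 2 * ε := by
    rcases eq_or_lt_of_le hc0 with h | h
    · rw [← h]; simp; linarith
    · rw [hδ, show 2 * c * (ε * c⁻¹) = 2 * ε * (c * c⁻¹) from by ring,
        mul_inv_cancel₀ (ne_of_gt h), mul_one]
  -- transfer the Y-sum to X via the bijection
  have h1 : ∀ a : Y, ∑ b : Y, dist a b = ∑ b : X, dist a (f b) :=
    fun a => (Fintype.sum_bijective f hbij (fun b => dist a (f b)) (fun b => dist a b)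
      (fun _ => rfl)).symm
  have hsum : ∑ a : Y, ∑ b : Y, dist a b = ∑ a : X, ∑ b : X, dist (f a) (f b) := by
    rw [← Fintype.sum_bijective f hbij (fun a => ∑ b : Y, dist (f a) b)
      (fun a => ∑ b : Y, dist a b) (fun _ => rfl)]
    exact Finset.sum_congr rfl fun a _ => h1 (f a)
  set g : X × X → ℝ := fun p => dist (f p.1) (f p.2) - dist p.1 p.2 with hg
  have hS : ∑ p ∈ Finset.univ ×ˢ Finset.univ, g p ≤ 0 := by
    have : ∑ p ∈ Finset.univ ×ˢ Finset.univ, g p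
        = ∑ a : X, ∑ b : X, dist (f a) (f b) - ∑ a : X, ∑ b : X, dist a b := by
      rw [Finset.sum_product]
      rw [← Finset.sum_sub_distrib]
      exact Finset.sum_congr rfl fun a _ => by rw [← Finset.sum_sub_distrib]
    rw [this]
    linarith [hsum ▸ hσ]
  have hdiag : ∑ p ∈ (Finset.univ : Finset X).diag, g p = 0 := by
    apply Finset.sum_eq_zero
    intro p hp
    rw [Finset.mem_diag] at hp
    simp [hg, hp.2]
  have hsplit : ∑ p ∈ (Finset.univ : Finset X).offDiag, g p ≤ 0 := by
    have := Finset.sum_union (f := g) (Finset.disjoint_diag_offDiag (Finset.univ : Finset X))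
    rw [Finset.diag_union_offDiag] at this
    rw [this] at hS
    linarith
  set P : Finset (X × X) := {(x, y), (y, x)} with hP
  have hPne : ((x, y) : X × X) ≠ (y, x) := by
    intro h
    exact hxny (congrArg Prod.fst h)
  have hPsub : P ⊆ (Finset.univ : Finset X).offDiag := by
    intro p hp
    rw [Finset.mem_offDiag]
    simp only [hP, Finset.mem_insert, Finset.mem_singleton] at hp
    rcases hp with h | h <;> subst h <;> exact ⟨Finset.mem_univ _, Finset.mem_univ _, by simp [hxny, hxny.symm]⟩
  have hPsum : 2 * ε < ∑ p ∈ P, g p := by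
    rw [hP, Finset.sum_pair hPne]
    have h2 : dist (f y) (f x) = dist (f x) (f y) := dist_comm _ _
    have h3 : dist y x = dist x y := dist_comm _ _
    simp only [hg]
    rw [h2, h3]
    linarith
  have hrest : (((Finset.univ : Finset X).offDiag \ P).card : ℝ) * (-δ)
      ≤ ∑ p ∈ (Finset.univ : Finset X).offDiag \ P, g p := by
    have h := Finset.card_nsmul_le_sum ((Finset.univ : Finset X).offDiag \ P) g (-δ)
      (fun p _ => by have := hcon p.1 p.2; simp only [hg]; linarith)
    rwa [nsmul_eq_mul] at h
  have hcard : (((Finset.univ : Finset X).offDiag \ P).card : ℝ) = (N:ℝ)*(N:ℝ) - (N:ℝ) - 2 := by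
    rw [Finset.card_sdiff_of_subset hPsub, Finset.offDiag_card]
    rw [Finset.card_univ, hX, Finset.card_pair hPne]
    have haux : 2 * N ≤ N * N := Nat.mul_le_mul_right N hN
    have h2N : 2 ≤ N * N - N := by omega
    have hNN : N ≤ N * N := by omega
    push_cast [Nat.cast_sub h2N, Nat.cast_sub hNN]
    ring
  have hfinal : ∑ p ∈ (Finset.univ : Finset X).offDiag, g p
      = ∑ p ∈ (Finset.univ : Finset X).offDiag \ P, g p + ∑ p ∈ P, g p :=
    (Finset.sum_sdiff hPsub).symm
  rw [hfinal] at hsplit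
  rw [hcard] at hrest
  have h2c : (N:ℝ)*(N:ℝ) - (N:ℝ) - 2 = 2 * c := by rw [hc]; ring
  rw [h2c] at hrest
  linarith
end

section
/- For every natural number N ≥ 2, max{ max_{l+m ≤ N, l,m ≥ 1} lcm(l, m), N } = M(N), where M(N) = k(k+1) if N = 2k+1 with k ≥ 2; M(N) = (2k−1)(2k+1) if N = 4k with k ≥ 2; M(N) = (2k−1)(2k+3) if N = 4k+2 with k ≥ 2; and M(N) = N otherwise (i.e. for N ∈ {2, 3, 4, 5, 6}). -/
/-- The maximum of `lcm l m` over pairs of positive integers with `l + m ≤ N`. -/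
def lcmMax (N : ℕ) : ℕ :=
  ((Finset.Icc 1 N ×ˢ Finset.Icc 1 N).filter (fun p => p.1 + p.2 ≤ N)).sup
    (fun p => Nat.lcm p.1 p.2)

/-- The quantity `M(N)` from the paper. -/
def Mval (N : ℕ) : ℕ :=
  if N % 2 = 1 ∧ 5 ≤ N then (N / 2) * (N / 2 + 1)
  else if N % 4 = 0 ∧ 8 ≤ N then (N / 2 - 1) * (N / 2 + 1)
  else if N % 4 = 2 ∧ 10 ≤ N then (N / 2 - 2) * (N / 2 + 2)
  else N

lemma le_lcmMax (N a b : ℕ) (ha : 1 ≤ a) (hb : 1 ≤ b) (hab : a + b ≤ N) :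
    Nat.lcm a b ≤ lcmMax N := by
  apply Finset.le_sup (f := fun p : ℕ × ℕ => Nat.lcm p.1 p.2) (b := (a, b))
  simp only [Finset.mem_filter, Finset.mem_product, Finset.mem_Icc]
  omega

lemma lcmMax_le (N B : ℕ) (h : ∀ a b, 1 ≤ a → 1 ≤ b → a + b ≤ N → Nat.lcm a b ≤ B) :
    lcmMax N ≤ B := by
  apply Finset.sup_le
  rintro ⟨a, b⟩ hp
  simp only [Finset.mem_filter, Finset.mem_product, Finset.mem_Icc] at hp
  exact h a b hp.1.1.1 hp.1.2.1 hp.2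

lemma lcm_le_mul (l m : ℕ) (hl : 0 < l) (hm : 0 < m) : Nat.lcm l m ≤ l * m :=
  Nat.le_of_dvd (by positivity) (Nat.lcm_dvd (dvd_mul_right l m) (dvd_mul_left m l))

/-- Pointwise bound in the odd case `N = 2k+1`. -/
lemma bound_odd (k l m : ℕ) (hl : 0 < l) (hm : 0 < m) (h : l + m ≤ 2*k+1) :
    Nat.lcm l m ≤ k * (k+1) := by
  wlog hlm : l ≤ m with H
  · rw [Nat.lcm_comm]; exact H k m l hm hl (by omega) (by omega)
  obtain ⟨d, rfl⟩ := Nat.exists_eq_add_of_le hlm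
  refine (lcm_le_mul _ _ hl hm).trans ?_
  rcases Nat.eq_zero_or_pos d with rfl | hd
  · have h1 : l ≤ k := by omega
    calc l * (l + 0) ≤ k * (k + 0) := Nat.mul_le_mul h1 (by omega)
    _ ≤ k * (k+1) := Nat.mul_le_mul_left k (by omega)
  · have hs : (2*l+d)^2 ≤ (2*k+1)^2 := Nat.pow_le_pow_left (by omega) 2
    have hid : 4*(l*(l+d)) + d^2 = (2*l+d)^2 := by ring
    have hd1 : 1 ≤ d^2 := Nat.one_le_pow 2 d hd
    nlinarith [hs, hid, hd1]

/-- Pointwise bound in the case `N = 4j+8`. -/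
lemma bound0 (j l m : ℕ) (hl : 0 < l) (hm : 0 < m) (h : l + m ≤ 4*j+8) :
    Nat.lcm l m ≤ (2*j+3) * (2*j+5) := by
  wlog hlm : l ≤ m with H
  · rw [Nat.lcm_comm]; exact H j m l hm hl (by omega) (by omega)
  obtain ⟨d, rfl⟩ := Nat.exists_eq_add_of_le hlm
  rcases Nat.eq_zero_or_pos d with rfl | hd
  · simp only [Nat.add_zero] at *
    rw [Nat.lcm_self]
    nlinarith [h]
  refine (lcm_le_mul _ _ hl hm).trans ?_
  have hid : 4*(l*(l+d)) + d^2 = (2*l+d)^2 := by ring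
  rcases Nat.even_or_odd d with he | ho
  · -- d even, d ≥ 2
    have hd2 : 2 ≤ d := by rcases he with ⟨e, rfl⟩; omega
    have hs : (2*l+d)^2 ≤ (4*j+8)^2 := Nat.pow_le_pow_left (by omega) 2
    have hd4 : 4 ≤ d^2 := by nlinarith
    nlinarith [hs, hid, hd4]
  · -- d odd, so 2l+d odd, ≤ 4j+7
    obtain ⟨e, rfl⟩ := ho
    have hso : 2*l+(2*e+1) ≤ 4*j+7 := by omega
    have hs : (2*l+(2*e+1))^2 ≤ (4*j+7)^2 := Nat.pow_le_pow_left hso 2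
    nlinarith [hs, hid]

/-- Pointwise bound in the case `N = 4j+10`. -/
lemma bound2 (j l m : ℕ) (hl : 0 < l) (hm : 0 < m) (h : l + m ≤ 4*j+10) :
    Nat.lcm l m ≤ (2*j+3) * (2*j+7) := by
  wlog hlm : l ≤ m with H
  · rw [Nat.lcm_comm]; exact H j m l hm hl (by omega) (by omega)
  obtain ⟨d, rfl⟩ := Nat.exists_eq_add_of_le hlm
  rcases Nat.eq_zero_or_pos d with rfl | hd
  · simp only [Nat.add_zero] at *
    rw [Nat.lcm_self]; nlinarith [h]
  have hid : 4*(l*(l+d)) + d^2 = (2*l+d)^2 := by ring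
  rcases Nat.eq_or_lt_of_le (Nat.one_le_iff_ne_zero.mpr (Nat.gcd_ne_zero_left (by omega) : Nat.gcd l (l+d) ≠ 0)) with hg | hg
  · -- gcd = 1: lcm = l*(l+d)
    have hcop : Nat.Coprime l (l+d) := hg.symm
    rw [Nat.Coprime.lcm_eq_mul hcop]
    rcases Nat.even_or_odd d with he | ho
    · rcases Nat.lt_or_ge d 4 with hd4 | hd4
      · -- d = 2; both l and l+2 odd
        have hd2 : d = 2 := by rcases he with ⟨e, rfl⟩; omega
        subst hd2
        have hlodd : ¬ (2 ∣ l) := by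
          intro h2
          have h2' : 2 ∣ l + 2 := by omega
          have := Nat.dvd_gcd h2 h2'
          rw [← hg] at this
          omega
        have hso : 2*l+2 ≤ 4*j+8 := by omega
        have hs : (2*l+2)^2 ≤ (4*j+8)^2 := Nat.pow_le_pow_left hso 2
        nlinarith [hs, hid]
      · -- d even ≥ 4
        have hs : (2*l+d)^2 ≤ (4*j+10)^2 := Nat.pow_le_pow_left (by omega) 2
        have hd16 : 16 ≤ d^2 := by nlinarith
        nlinarith [hs, hid, hd16]
    · -- d odd
      obtain ⟨e, rfl⟩ := ho
      have hso : 2*l+(2*e+1) ≤ 4*j+9 := by omega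
      have hs : (2*l+(2*e+1))^2 ≤ (4*j+9)^2 := Nat.pow_le_pow_left hso 2
      nlinarith [hs, hid]
  · -- gcd ≥ 2
    have hkey := Nat.gcd_mul_lcm l (l+d)
    have h2 : 2 * Nat.lcm l (l+d) ≤ l * (l+d) := by
      calc 2 * Nat.lcm l (l+d) ≤ Nat.gcd l (l+d) * Nat.lcm l (l+d) :=
        Nat.mul_le_mul_right _ hg
      _ = l * (l+d) := hkey
    have hs : (2*l+d)^2 ≤ (4*j+10)^2 := Nat.pow_le_pow_left (by omega) 2
    nlinarith [hs, hid, h2]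

lemma cop2' (j : ℕ) : Nat.Coprime (2*j+3) (2*j+5) := by
  have hsub := Nat.dvd_sub (Nat.gcd_dvd_right (2*j+3) (2*j+5)) (Nat.gcd_dvd_left (2*j+3) (2*j+5))
  have he : 2*j+5 - (2*j+3) = 2 := by omega
  rw [he] at hsub
  have h3 := Nat.gcd_dvd_left (2*j+3) (2*j+5)
  have h4 : Nat.gcd (2*j+3) (2*j+5) ≤ 2 := Nat.le_of_dvd (by norm_num) hsub
  show Nat.gcd (2*j+3) (2*j+5) = 1
  generalize hG : Nat.gcd (2*j+3) (2*j+5) = g at hsub h3 h4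
  interval_cases g <;> omega

lemma cop4' (j : ℕ) : Nat.Coprime (2*j+3) (2*j+7) := by
  have hsub := Nat.dvd_sub (Nat.gcd_dvd_right (2*j+3) (2*j+7)) (Nat.gcd_dvd_left (2*j+3) (2*j+7))
  have he : 2*j+7 - (2*j+3) = 4 := by omega
  rw [he] at hsub
  have h3 := Nat.gcd_dvd_left (2*j+3) (2*j+7)
  have h4 : Nat.gcd (2*j+3) (2*j+7) ≤ 4 := Nat.le_of_dvd (by norm_num) hsub
  show Nat.gcd (2*j+3) (2*j+7) = 1
  generalize hG : Nat.gcd (2*j+3) (2*j+7) = g at hsub h3 h4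
  interval_cases g <;> omega

theorem max_lcm_eq_M (N : ℕ) (hN : 2 ≤ N) : max (lcmMax N) N = Mval N := by
  rcases Nat.lt_or_ge N 7 with h7 | h7
  · interval_cases N <;> decide
  · rcases (by omega : N % 2 = 1 ∨ N % 4 = 0 ∨ N % 4 = 2) with h | h | h
    · -- odd case, N = 2k+1, k ≥ 3
      set k := N / 2 with hk
      have hNk : N = 2*k+1 := by omega
      have hk3 : 3 ≤ k := by omega
      have hM : Mval N = k * (k+1) := by
        have h1 : N % 2 = 1 := h
        have h2 : 5 ≤ N := by omega
        simp only [Mval, if_pos (And.intro h1 h2), ← hk]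
      have hub : lcmMax N ≤ k * (k+1) :=
        lcmMax_le N _ (fun a b ha hb hab => bound_odd k a b ha hb (by omega))
      have hlb : k * (k+1) ≤ lcmMax N := by
        have hcop : Nat.Coprime k (k+1) := by
          show Nat.gcd k (k+1) = 1
          simp [Nat.gcd_comm k (k+1)]
        have := le_lcmMax N k (k+1) (by omega) (by omega) (by omega)
        rwa [Nat.Coprime.lcm_eq_mul hcop] at this
      have hNle : N ≤ k * (k+1) := by nlinarith
      rw [hM, le_antisymm hub hlb, max_eq_left hNle]
    · -- N = 4j+8
      set j := N / 4 - 2 with hj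
      have hNj : N = 4*j+8 := by omega
      have hM : Mval N = (2*j+3) * (2*j+5) := by
        have h1 : ¬ (N % 2 = 1 ∧ 5 ≤ N) := by omega
        have h2 : N % 4 = 0 ∧ 8 ≤ N := by omega
        have h3 : N/2 - 1 = 2*j+3 := by omega
        have h4 : N/2 + 1 = 2*j+5 := by omega
        simp only [Mval, if_neg h1, if_pos h2, h3, h4]
      have hub : lcmMax N ≤ (2*j+3) * (2*j+5) :=
        lcmMax_le N _ (fun a b ha hb hab => bound0 j a b ha hb (by omega))
      have hlb : (2*j+3) * (2*j+5) ≤ lcmMax N := by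
        have := le_lcmMax N (2*j+3) (2*j+5) (by omega) (by omega) (by omega)
        rwa [Nat.Coprime.lcm_eq_mul (cop2' j)] at this
      have hNle : N ≤ (2*j+3) * (2*j+5) := by nlinarith
      rw [hM, le_antisymm hub hlb, max_eq_left hNle]
    · -- N = 4j+10
      set j := N / 4 - 2 with hj
      have hNj : N = 4*j+10 := by omega
      have hM : Mval N = (2*j+3) * (2*j+7) := by
        have h1 : ¬ (N % 2 = 1 ∧ 5 ≤ N) := by omega
        have h2 : ¬ (N % 4 = 0 ∧ 8 ≤ N) := by omega
        have h3 : N % 4 = 2 ∧ 10 ≤ N := by omega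
        have h4 : N/2 - 2 = 2*j+3 := by omega
        have h5 : N/2 + 2 = 2*j+7 := by omega
        simp only [Mval, if_neg h1, if_neg h2, if_pos h3, h4, h5]
      have hub : lcmMax N ≤ (2*j+3) * (2*j+7) :=
        lcmMax_le N _ (fun a b ha hb hab => bound2 j a b ha hb (by omega))
      have hlb : (2*j+3) * (2*j+7) ≤ lcmMax N := by
        have := le_lcmMax N (2*j+3) (2*j+7) (by omega) (by omega) (by omega)
        rwa [Nat.Coprime.lcm_eq_mul (cop4' j)] at this
      have hNle : N ≤ (2*j+3) * (2*j+7) := by nlinarith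
      rw [hM, le_antisymm hub hlb, max_eq_left hNle]
end

section
/- There exists an infinite metric space X that is strongly plastic (every noncontractive map f : X → X is an isometric embedding) but not uniformly plastic: there is ε > 0 such that for every δ > 0 there is a bijection f : X → X with d(f(x), f(y)) > d(x, y) + ε for some x, y ∈ X, yet d(f(x̃), f(ỹ)) ≥ d(x̃, ỹ) − δ for all x̃, ỹ ∈ X. -/
/-!
The space is the disjoint union of finite pieces `Xₙ = {0, …, n + 2}`, at mutual distance `3`,
where `dist i j = 5 - (i + j - 2) / (n + 1)` inside `Xₙ`. All nonzero distances lie in `[3, 6]`,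
so the triangle inequality is automatic.

A noncontracting self-map keeps each piece inside one piece, since distances inside a piece
exceed `3`. Piece `n` cannot go to a smaller piece (injectivity), nor to a larger one, because the
diameter `5 + 1 / (n + 1)` of `Xₙ` decreases with `n`. So each finite piece is mapped injectively
into itself, and there a noncontracting map preserves the sum of all distances, hence each one.

Rotating `X_N` by one step raises `dist (N + 2) 0` by `1` and lowers every other distance of
`X_N` by at most `2 / (N + 1)`.
-/

open Function Set

theorem Finite.eq_comp_of_le_comp {β M : Type*} [Finite β] [AddCommMonoid M] [PartialOrder M]
    [IsOrderedCancelAddMonoid M] {T : β → M} {G : β → β} (hG : Injective G)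
    (h : ∀ p, T p ≤ T (G p)) (p : β) : T (G p) = T p := by
  have := Fintype.ofFinite β
  have hsum : ∑ q, T q = ∑ q, T (G q) :=
    ((Finite.injective_iff_bijective.mp hG).sum_comp T).symm
  exact ((Finset.sum_eq_sum_iff_of_le fun q _ => h q).mp hsum p (Finset.mem_univ p)).symm

theorem injective_of_dist_le_dist {α : Type*} [MetricSpace α] {f : α → α}
    (hf : ∀ x y, dist x y ≤ dist (f x) (f y)) : Injective f := fun x y h =>
  dist_le_zero.mp (by simpa [h] using hf x y)

lemma val_finRotate_le {n : ℕ} (i : Fin (n + 1)) : (finRotate (n + 1) i : ℕ) ≤ i + 1 := by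
  rw [coe_finRotate]
  split_ifs <;> omega

lemma Sigma.exists_eq_mk_of_fst_eq {α : Type*} {β : α → Type*} {x : Σ a, β a} {a : α}
    (h : x.1 = a) : ∃ b, x = ⟨a, b⟩ := by
  subst h
  exact ⟨x.2, rfl⟩

noncomputable abbrev MetricSpace.ofMemIcc {α : Type*} [DecidableEq α] (d : α → α → ℝ)
    (c : ℝ) (hc : 0 < c) (hsymm : ∀ x y, d x y = d y x)
    (hd : ∀ x y, x ≠ y → d x y ∈ Icc c (2 * c)) :
    MetricSpace α where
  dist x y := if x = y then 0 else d x y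
  dist_self x := if_pos rfl
  dist_comm x y := by
    by_cases h : x = y
    · subst h; rfl
    · simp only [h, Ne.symm h, if_false, hsymm x y]
  dist_triangle x y z := by
    by_cases hxz : x = z
    · subst hxz
      by_cases hxy : x = y
      · simp [hxy]
      · simp only [if_true, hxy, Ne.symm hxy, if_false]
        linarith [(hd x y hxy).1, (hd y x (Ne.symm hxy)).1]
    by_cases hxy : x = y
    · subst hxy; simp
    by_cases hyz : y = z
    · subst hyz; simp
    simp only [hxz, hxy, hyz, if_false]
    linarith [(hd x z hxz).2, (hd x y hxy).1, (hd y z hyz).1]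
  eq_of_dist_eq_zero {x y} h := by
    by_contra hxy
    simp only [hxy, if_false] at h
    linarith [(hd x y hxy).1]

namespace PlasticExample

abbrev Space : Type := Σ n : ℕ, Fin (n + 3)

/-- The distance in piece `n` between two points whose labels add up to `s`. -/
noncomputable def pieceDist (n s : ℕ) : ℝ := 5 - ((s : ℝ) - 2) / (n + 1)

lemma pieceDist_one (n : ℕ) : pieceDist n 1 = 5 + 1 / (n + 1) := by
  unfold pieceDist; push_cast; ring

lemma pieceDist_le_pieceDist {n s t : ℕ} (h : s ≤ t) : pieceDist n t ≤ pieceDist n s := by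
  unfold pieceDist
  gcongr

lemma pieceDist_add_two (n s : ℕ) : pieceDist n (s + 2) = pieceDist n s - 2 / (n + 1) := by
  unfold pieceDist; push_cast; ring

lemma three_lt_pieceDist {n s : ℕ} (h : s ≤ 2 * n + 3) : 3 < pieceDist n s := by
  have h' : (s : ℝ) ≤ 2 * n + 3 := by exact_mod_cast h
  unfold pieceDist
  rw [lt_sub_comm, div_lt_iff₀ (by positivity)]
  linarith

lemma pieceDist_le_six {n s : ℕ} (h : 1 ≤ s) : pieceDist n s ≤ 6 := by
  have hn : 1 / ((n : ℝ) + 1) ≤ 1 := by rw [div_le_one₀ (by positivity)]; simp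
  linarith [pieceDist_le_pieceDist (n := n) h, pieceDist_one n]

lemma one_le_add_of_ne {n : ℕ} {i j : Fin (n + 3)} (h : i ≠ j) : 1 ≤ (i : ℕ) + j := by
  have := Fin.val_ne_of_ne h
  omega

lemma add_le_of_ne {n : ℕ} {i j : Fin (n + 3)} (h : i ≠ j) : (i : ℕ) + j ≤ 2 * n + 3 := by
  have := Fin.val_ne_of_ne h
  omega

noncomputable def offDist (x y : Space) : ℝ :=
  if x.1 = y.1 then pieceDist x.1 (x.2 + y.2) else 3

lemma offDist_mem_Icc {x y : Space} (h : x ≠ y) : offDist x y ∈ Icc 3 (2 * 3) := by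
  obtain ⟨n, i⟩ := x
  obtain ⟨m, j⟩ := y
  unfold offDist
  split_ifs with hnm
  · dsimp only at hnm; subst hnm
    have hij : i ≠ j := fun e => h (e ▸ rfl)
    exact ⟨(three_lt_pieceDist (add_le_of_ne hij)).le,
      by linarith [pieceDist_le_six (n := n) (one_le_add_of_ne hij)]⟩
  · norm_num

noncomputable instance : MetricSpace Space :=
  .ofMemIcc offDist 3 (by norm_num)
    (fun x y => by
      unfold offDist
      split_ifs with h h' h'
      exacts [congrArg₂ pieceDist h (add_comm _ _), (h' h.symm).elim, (h h'.symm).elim, rfl])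
    fun _ _ => offDist_mem_Icc

lemma dist_of_fst_ne {x y : Space} (h : x.1 ≠ y.1) : dist x y = 3 := by
  have hxy : x ≠ y := fun e => h (congrArg Sigma.fst e)
  change ite _ _ _ = _
  simp [hxy, offDist, h]

lemma dist_mk_mk_of_ne {n m : ℕ} {i : Fin (n + 3)} {j : Fin (m + 3)} (h : n ≠ m) :
    dist (⟨n, i⟩ : Space) ⟨m, j⟩ = 3 :=
  dist_of_fst_ne h

lemma dist_mk_mk {n : ℕ} {i j : Fin (n + 3)} (h : i ≠ j) :
    dist (⟨n, i⟩ : Space) ⟨n, j⟩ = pieceDist n (i + j) := by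
  change ite _ _ _ = _
  simp [h, offDist]

lemma three_lt_dist_mk_mk {n : ℕ} {i j : Fin (n + 3)} (h : i ≠ j) :
    3 < dist (⟨n, i⟩ : Space) ⟨n, j⟩ := by
  rw [dist_mk_mk h]
  exact three_lt_pieceDist (add_le_of_ne h)

lemma dist_mk_mk_le_pieceDist_one {n : ℕ} (i j : Fin (n + 3)) :
    dist (⟨n, i⟩ : Space) ⟨n, j⟩ ≤ pieceDist n 1 := by
  rcases eq_or_ne i j with rfl | h
  · rw [dist_self, pieceDist_one]; positivity
  · rw [dist_mk_mk h]; exact pieceDist_le_pieceDist (one_le_add_of_ne h)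

section Plastic

variable {f : Space → Space}

lemma fst_apply_eq_fst_apply (hf : ∀ x y, dist x y ≤ dist (f x) (f y)) (n : ℕ)
    (i j : Fin (n + 3)) : (f ⟨n, i⟩).1 = (f ⟨n, j⟩).1 := by
  by_contra hne
  have hij : i ≠ j := by rintro rfl; exact hne rfl
  have := hf ⟨n, i⟩ ⟨n, j⟩
  rw [dist_of_fst_ne hne] at this
  exact (three_lt_dist_mk_mk hij).not_ge this

lemma injective_of_apply_eq_mk (hf : ∀ x y, dist x y ≤ dist (f x) (f y)) {n k : ℕ}
    {g : Fin (n + 3) → Fin (k + 3)} (hg : ∀ i, f ⟨n, i⟩ = ⟨k, g i⟩) : Injective g := by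
  intro a b hab
  have := injective_of_dist_le_dist hf (by rw [hg, hg, hab] : f ⟨n, a⟩ = f ⟨n, b⟩)
  simpa using this

/-- Piece `n` lands in piece `k ≥ n` by counting, and in `k ≤ n` by comparing diameters. -/
lemma eq_of_apply_eq_mk (hf : ∀ x y, dist x y ≤ dist (f x) (f y)) {n k : ℕ}
    {g : Fin (n + 3) → Fin (k + 3)} (hg : ∀ i, f ⟨n, i⟩ = ⟨k, g i⟩) : k = n := by
  have hnk : n ≤ k := by
    have := Fin.le_of_injective g (injective_of_apply_eq_mk hf hg)
    omega
  have hdiam : pieceDist n 1 ≤ pieceDist k 1 := by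
    have h01 : (0 : Fin (n + 3)) ≠ 1 := by simp
    have := hf ⟨n, 0⟩ ⟨n, 1⟩
    rw [dist_mk_mk h01, hg, hg] at this
    simpa using this.trans (dist_mk_mk_le_pieceDist_one _ _)
  rw [pieceDist_one, pieceDist_one, add_le_add_iff_left,
    one_div_le_one_div (by positivity) (by positivity)] at hdiam
  exact le_antisymm (Nat.cast_le.mp (by linarith : (k : ℝ) ≤ n)) hnk

lemma exists_injective_apply_eq_mk (hf : ∀ x y, dist x y ≤ dist (f x) (f y)) (n : ℕ) :
    ∃ g : Fin (n + 3) → Fin (n + 3), Injective g ∧ ∀ i, f ⟨n, i⟩ = ⟨n, g i⟩ := by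
  generalize hk : (f ⟨n, 0⟩).1 = k
  choose g hg using fun i : Fin (n + 3) =>
    Sigma.exists_eq_mk_of_fst_eq ((fst_apply_eq_fst_apply hf n i 0).trans hk)
  obtain rfl := eq_of_apply_eq_mk hf hg
  exact ⟨g, injective_of_apply_eq_mk hf hg, hg⟩

theorem dist_apply_apply_eq (hf : ∀ x y, dist x y ≤ dist (f x) (f y)) (x y : Space) :
    dist (f x) (f y) = dist x y := by
  obtain ⟨n, i⟩ := x
  obtain ⟨m, j⟩ := y
  obtain ⟨g, hginj, hg⟩ := exists_injective_apply_eq_mk hf n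
  obtain ⟨g', -, hg'⟩ := exists_injective_apply_eq_mk hf m
  by_cases hnm : n = m
  · subst hnm
    rw [hg, hg]
    exact Finite.eq_comp_of_le_comp (T := fun p => dist (⟨n, p.1⟩ : Space) ⟨n, p.2⟩)
      (G := Prod.map g g) (hginj.prodMap hginj)
      (fun p => by simpa [hg] using hf ⟨n, p.1⟩ ⟨n, p.2⟩) (i, j)
  · rw [dist_mk_mk_of_ne hnm, hg, hg', dist_mk_mk_of_ne hnm]

end Plastic

def rotate (N : ℕ) : Space ≃ Space :=
  Equiv.sigmaCongrRight (update (fun n => Equiv.refl (Fin (n + 3))) N (finRotate (N + 3)))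

lemma rotate_of_fst_ne {N : ℕ} {x : Space} (h : x.1 ≠ N) : rotate N x = x := by
  simp [rotate, h]

lemma rotate_mk_self (N : ℕ) (i : Fin (N + 3)) :
    rotate N ⟨N, i⟩ = ⟨N, finRotate _ i⟩ := by
  simp [rotate]

lemma dist_sub_le_dist_rotate (N : ℕ) (x y : Space) :
    dist x y - 2 / (N + 1) ≤ dist (rotate N x) (rotate N y) := by
  have hpos : 0 ≤ 2 / ((N : ℝ) + 1) := by positivity
  obtain ⟨n, i⟩ := x
  obtain ⟨m, j⟩ := y
  by_cases hnm : n = m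
  swap
  · have : (rotate N ⟨n, i⟩).1 ≠ (rotate N ⟨m, j⟩).1 := hnm
    rw [dist_mk_mk_of_ne hnm, dist_of_fst_ne this]
    linarith
  subst hnm
  by_cases hn : n = N
  swap
  · rw [rotate_of_fst_ne hn, rotate_of_fst_ne hn]
    linarith
  subst hn
  rcases eq_or_ne i j with rfl | hij
  · rw [dist_self, dist_self]
    linarith
  rw [rotate_mk_self, rotate_mk_self, dist_mk_mk hij,
    dist_mk_mk ((finRotate _).injective.ne hij), ← pieceDist_add_two]
  apply pieceDist_le_pieceDist
  linarith [val_finRotate_le i, val_finRotate_le j]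

lemma dist_rotate_last_zero (N : ℕ) :
    dist (rotate N ⟨N, Fin.last _⟩) (rotate N ⟨N, 0⟩) =
      dist (⟨N, Fin.last _⟩ : Space) ⟨N, 0⟩ + 1 := by
  have h01 : (0 : Fin (N + 3)) ≠ 1 := by simp
  have hl0 : Fin.last (N + 2) ≠ 0 := by simp
  rw [rotate_mk_self, rotate_mk_self, finRotate_last, finRotate_apply_zero, dist_mk_mk h01,
    dist_mk_mk hl0]
  simp only [Fin.val_last, Fin.val_zero, Fin.val_one]
  unfold pieceDist
  push_cast
  field_simp
  ring

end PlasticExample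

open PlasticExample in
theorem exists_strongly_plastic_not_uniformly_plastic :
    ∃ (X : Type) (_ : MetricSpace X), Infinite X ∧
      (∀ f : X → X, (∀ x y : X, dist x y ≤ dist (f x) (f y)) →
        ∀ x y : X, dist (f x) (f y) = dist x y) ∧
      (∃ ε : ℝ, 0 < ε ∧ ∀ δ : ℝ, 0 < δ →
        ∃ f : X → X, Function.Bijective f ∧
          (∃ x y : X, dist (f x) (f y) > dist x y + ε) ∧
          (∀ x y : X, dist (f x) (f y) ≥ dist x y - δ)) := by
  refine ⟨Space, inferInstance,
    Infinite.of_injective (fun n : ℕ => (⟨n, 0⟩ : Space)) fun _ _ e => congrArg Sigma.fst e,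
    fun f hf => dist_apply_apply_eq hf, 1 / 2, by norm_num, fun δ hδ => ?_⟩
  obtain ⟨N, hN⟩ := exists_nat_one_div_lt (half_pos hδ)
  have hNδ : 2 / ((N : ℝ) + 1) < δ := by
    rw [div_lt_iff₀ (by positivity)] at hN ⊢
    linarith
  refine ⟨rotate N, (rotate N).bijective, ⟨_, _, by rw [dist_rotate_last_zero]; linarith⟩,
    fun x y => ?_⟩
  linarith [dist_sub_le_dist_rotate N x y]
end

section
/- Let X, Y be totally bounded metric spaces such that α(X, ε) ≤ α(Y, ε) for every ε > 0, where α(Z, ε) = inf{ σ(A) : A is a finite ε-net in Z } and σ(A) is the sum of pairwise distances of A. Then every nonexpansive surjection f : X → Y (i.e. d(f(x), f(y)) ≤ d(x, y) for all x, y, with f onto) is an isometry. -/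
open Finset in
/-- Sum of pairwise distances of a finite set. -/
noncomputable def sigmaSum {Z : Type*} [MetricSpace Z] (A : Finset Z) : ℝ :=
  ∑ a ∈ A, ∑ b ∈ A, dist a b

/-- `α(Z, ε)`: infimum of `σ(A)` over finite `ε`-nets `A` of `Z`. -/
noncomputable def alphaInf (Z : Type*) [MetricSpace Z] (ε : ℝ) : ℝ :=
  sInf { s : ℝ | ∃ A : Finset Z, (∀ z : Z, ∃ a ∈ A, dist z a < ε) ∧ s = sigmaSum A }

private lemma sum_image_le_aux {α β : Type*} [DecidableEq β] (s : Finset α) (g : α → β)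
    (h : β → ℝ) (hh : ∀ b, 0 ≤ h b) :
    ∑ b ∈ s.image g, h b ≤ ∑ a ∈ s, h (g a) := by
  classical
  rw [Finset.sum_comp h g]
  apply Finset.sum_le_sum
  intro b hb
  have hcard : 1 ≤ (s.filter (fun a => g a = b)).card := by
    obtain ⟨a, ha, rfl⟩ := Finset.mem_image.mp hb
    exact Finset.card_pos.mpr ⟨a, Finset.mem_filter.mpr ⟨ha, rfl⟩⟩
  rw [nsmul_eq_mul]
  exact le_mul_of_one_le_left (hh b) (by exact_mod_cast hcard)

private lemma sigmaSum_nonneg {Z : Type*} [MetricSpace Z] (A : Finset Z) : 0 ≤ sigmaSum A := by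
  apply Finset.sum_nonneg; intro a _
  exact Finset.sum_nonneg fun b _ => dist_nonneg

theorem nonexpansive_surjection_isometry_of_alpha_le
    (X Y : Type*) [MetricSpace X] [MetricSpace Y]
    (hXtb : TotallyBounded (Set.univ : Set X))
    (hYtb : TotallyBounded (Set.univ : Set Y))
    (hα : ∀ ε : ℝ, 0 < ε → alphaInf X ε ≤ alphaInf Y ε)
    (f : X → Y) (hsurj : Function.Surjective f)
    (hne : ∀ x y : X, dist (f x) (f y) ≤ dist x y) :
    Function.Bijective f ∧ ∀ x y : X, dist (f x) (f y) = dist x y := by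
  classical
  have main : ∀ x y : X, dist (f x) (f y) = dist x y := by
    intro x0 y0
    by_contra hne'
    have hlt : dist (f x0) (f y0) < dist x0 y0 := lt_of_le_of_ne (hne _ _) hne'
    set c : ℝ := dist x0 y0 - dist (f x0) (f y0) with hc
    have hc0 : 0 < c := by simp only [hc]; linarith
    set ε : ℝ := c / 8 with hεdef
    have hε0 : 0 < ε := by positivity
    -- get a near-optimal ε-net A of X
    obtain ⟨t, htf, htcov⟩ := Metric.totallyBounded_iff.mp hXtb ε hε0
    set SX := { s : ℝ | ∃ A : Finset X, (∀ z : X, ∃ a ∈ A, dist z a < ε) ∧ s = sigmaSum A }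
      with hSX
    have hSXne : SX.Nonempty := by
      refine ⟨sigmaSum htf.toFinset, htf.toFinset, ?_, rfl⟩
      intro z
      have := htcov (Set.mem_univ z)
      simp only [Set.mem_iUnion, Metric.mem_ball] at this
      obtain ⟨y, hy, hdy⟩ := this
      exact ⟨y, htf.mem_toFinset.mpr hy, hdy⟩
    have hSXbdd : BddBelow SX := by
      refine ⟨0, ?_⟩
      rintro s ⟨A, _, rfl⟩
      exact sigmaSum_nonneg A
    have hXle : alphaInf X ε = sInf SX := rfl
    have hlt2 : sInf SX < sInf SX + c / 2 := by linarith
    obtain ⟨s, hsmem, hslt⟩ := exists_lt_of_csInf_lt hSXne hlt2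
    obtain ⟨A, hAnet, rfl⟩ := hsmem
    -- pick net points near x0 and y0
    obtain ⟨a, haA, hax⟩ := hAnet x0
    obtain ⟨b, hbA, hby⟩ := hAnet y0
    have hd : c ≤ dist x0 y0 := by have := dist_nonneg (x := f x0) (y := f y0); linarith
    have hab : a ≠ b := by
      intro h
      subst h
      have : dist x0 y0 ≤ dist x0 a + dist y0 a := by
        rw [dist_comm y0 a]; exact dist_triangle x0 a y0
      have : dist x0 y0 < 2 * ε := by linarith
      have : c < 2 * (c / 8) := lt_of_le_of_lt hd this
      linarith
    -- contraction at the pair (a, b)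
    have hcontr : c - 4 * ε ≤ dist a b - dist (f a) (f b) := by
      have h1 : dist (f a) (f b) ≤ dist a x0 + dist (f x0) (f y0) + dist y0 b := by
        calc dist (f a) (f b) ≤ dist (f a) (f x0) + dist (f x0) (f y0) + dist (f y0) (f b) :=
              dist_triangle4 _ _ _ _
          _ ≤ dist a x0 + dist (f x0) (f y0) + dist y0 b := by
              have := hne a x0
              have := hne y0 b
              linarith
      have h2 : dist x0 y0 - dist x0 a - dist y0 b ≤ dist a b := by
        have t1 : dist x0 y0 ≤ dist x0 a + dist a b + dist b y0 := dist_triangle4 _ _ _ _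
        have : dist b y0 = dist y0 b := dist_comm _ _
        linarith
      have hax' : dist a x0 = dist x0 a := dist_comm _ _
      linarith
    -- the image net in Y
    set B : Finset Y := A.image f with hB
    have hBnet : ∀ z : Y, ∃ v ∈ B, dist z v < ε := by
      intro z
      obtain ⟨x, rfl⟩ := hsurj z
      obtain ⟨p, hpA, hpd⟩ := hAnet x
      exact ⟨f p, Finset.mem_image_of_mem f hpA, lt_of_le_of_lt (hne x p) hpd⟩
    -- σ(B) ≤ ∑∑ dist (f p) (f q)
    have hB1 : sigmaSum B ≤ ∑ p ∈ A, ∑ q ∈ A, dist (f p) (f q) := by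
      have step1 : sigmaSum B ≤ ∑ p ∈ A, ∑ v ∈ B, dist (f p) v := by
        apply sum_image_le_aux A f (fun u => ∑ v ∈ B, dist u v)
        intro u
        exact Finset.sum_nonneg fun v _ => dist_nonneg
      refine step1.trans (Finset.sum_le_sum fun p _ => ?_)
      exact sum_image_le_aux A f (fun v => dist (f p) v) (fun v => dist_nonneg)
    -- ∑∑ dist (f p) (f q) ≤ σ(A) - c
    have hB2 : ∑ p ∈ A, ∑ q ∈ A, dist (f p) (f q) ≤ sigmaSum A - c := by
      set F : X × X → ℝ := fun p => dist p.1 p.2 - dist (f p.1) (f p.2) with hF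
      have hFnn : ∀ p : X × X, 0 ≤ F p := by
        intro p; simp only [hF]; have := hne p.1 p.2; linarith
      have hpair : ((a, b) : X × X) ≠ (b, a) := by
        simp [Prod.ext_iff]; intro h; exact absurd h hab
      have hsub : ({(a, b), (b, a)} : Finset (X × X)) ⊆ A ×ˢ A := by
        intro p hp
        rcases Finset.mem_insert.mp hp with h | h
        · subst h; exact Finset.mem_product.mpr ⟨haA, hbA⟩
        · rw [Finset.mem_singleton] at h; subst h
          exact Finset.mem_product.mpr ⟨hbA, haA⟩
      have hsum : F (a, b) + F (b, a) ≤ ∑ p ∈ A ×ˢ A, F p := by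
        rw [← Finset.sum_pair hpair]
        exact Finset.sum_le_sum_of_subset_of_nonneg hsub fun p hp _ => hFnn p
      have hFab : c - 4 * ε ≤ F (a, b) := hcontr
      have hFba : c - 4 * ε ≤ F (b, a) := by
        have h1 : dist b a = dist a b := dist_comm _ _
        have h2 : dist (f b) (f a) = dist (f a) (f b) := dist_comm _ _
        simp only [hF, h1, h2]; exact hcontr
      have hεc : 2 * (c - 4 * ε) = c := by rw [hεdef]; ring
      have htot : ∑ p ∈ A ×ˢ A, F p =
          sigmaSum A - ∑ p ∈ A, ∑ q ∈ A, dist (f p) (f q) := by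
        rw [Finset.sum_product]
        simp only [hF, sigmaSum]
        rw [← Finset.sum_sub_distrib]
        congr 1
        ext p
        rw [← Finset.sum_sub_distrib]
      have : c ≤ ∑ p ∈ A ×ˢ A, F p := by linarith
      linarith [htot ▸ this]
    -- conclude α(Y, ε) ≤ σ(B) ≤ σ(A) - c < α(X, ε) - c/2
    have hYle : alphaInf Y ε ≤ sigmaSum B := by
      apply csInf_le
      · refine ⟨0, ?_⟩
        rintro s ⟨C, _, rfl⟩
        exact sigmaSum_nonneg C
      · exact ⟨B, hBnet, rfl⟩
    have hXY := hα ε hε0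
    rw [hXle] at hXY
    linarith
  refine ⟨⟨?_, hsurj⟩, main⟩
  intro x y hxy
  have h0 : dist x y = 0 := by
    have := main x y
    rw [hxy, dist_self] at this
    linarith
  exact dist_eq_zero.mp h0
end

section
/- Every totally bounded metric space X is strongly plastic: every noncontractive map f : X → X is an isometric embedding. -/
private lemma iterate_noncontractive {X : Type*} [MetricSpace X] (f : X → X)
    (hnc : ∀ x y : X, dist x y ≤ dist (f x) (f y)) :
    ∀ (k : ℕ) (a b : X), dist a b ≤ dist (f^[k] a) (f^[k] b) := by
  intro k
  induction k with
  | zero => simp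
  | succ n ih =>
    intro a b
    rw [Function.iterate_succ_apply', Function.iterate_succ_apply']
    exact le_trans (ih a b) (hnc _ _)

private lemma almost_periodic {X : Type*} [MetricSpace X]
    (hXtb : TotallyBounded (Set.univ : Set X))
    (f : X → X) (hnc : ∀ x y : X, dist x y ≤ dist (f x) (f y))
    (x y : X) {ε : ℝ} (hε : 0 < ε) :
    ∃ k : ℕ, 1 ≤ k ∧ dist (f^[k] x) x < ε ∧ dist (f^[k] y) y < ε := by
  rw [Metric.totallyBounded_iff] at hXtb
  obtain ⟨t, htfin, htcov⟩ := hXtb (ε / 2) (by linarith)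
  have hmem : ∀ z : X, ∃ c ∈ t, z ∈ Metric.ball c (ε / 2) := by
    intro z
    simpa using htcov (Set.mem_univ z)
  choose c hct hcball using hmem
  have : Finite ↥t := htfin
  obtain ⟨m, n, hmn, heq⟩ := Finite.exists_ne_map_eq_of_infinite
    (fun n : ℕ => ((⟨c (f^[n] x), hct _⟩ : ↥t), (⟨c (f^[n] y), hct _⟩ : ↥t)))
  have heqx : c (f^[m] x) = c (f^[n] x) := by
    simpa using congrArg (fun p => (Subtype.val p.1 : X)) heq
  have heqy : c (f^[m] y) = c (f^[n] y) := by
    simpa using congrArg (fun p => (Subtype.val p.2 : X)) heq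
  have key : ∀ m n : ℕ, m < n → c (f^[m] x) = c (f^[n] x) → c (f^[m] y) = c (f^[n] y) →
      ∃ k : ℕ, 1 ≤ k ∧ dist (f^[k] x) x < ε ∧ dist (f^[k] y) y < ε := by
    intro m n hlt hcx hcy
    have close : ∀ z : X, c (f^[m] z) = c (f^[n] z) → dist (f^[m] z) (f^[n] z) < ε := by
      intro z hcz
      have h1 := hcball (f^[m] z)
      have h2 := hcball (f^[n] z)
      rw [Metric.mem_ball] at h1 h2
      rw [hcz] at h1
      calc dist (f^[m] z) (f^[n] z)
          ≤ dist (f^[m] z) (c (f^[n] z)) + dist (c (f^[n] z)) (f^[n] z) := dist_triangle _ _ _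
        _ < ε / 2 + ε / 2 := by rw [dist_comm (c (f^[n] z))]; linarith
        _ = ε := by ring
    have step : ∀ z : X, c (f^[m] z) = c (f^[n] z) → dist (f^[n - m] z) z < ε := by
      intro z hcz
      have h := iterate_noncontractive f hnc m (f^[n - m] z) z
      rw [← Function.iterate_add_apply] at h
      have hn : m + (n - m) = n := by omega
      rw [hn] at h
      calc dist (f^[n - m] z) z ≤ dist (f^[n] z) (f^[m] z) := h
        _ = dist (f^[m] z) (f^[n] z) := dist_comm _ _
        _ < ε := close z hcz
    exact ⟨n - m, by omega, step x hcx, step y hcy⟩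
  rcases lt_or_gt_of_ne hmn with h | h
  · exact key m n h heqx heqy
  · exact key n m h heqx.symm heqy.symm

theorem totallyBounded_strongly_plastic
    (X : Type*) [MetricSpace X] (hXtb : TotallyBounded (Set.univ : Set X))
    (f : X → X) (hnc : ∀ x y : X, dist x y ≤ dist (f x) (f y)) :
    ∀ x y : X, dist (f x) (f y) = dist x y := by
  intro x y
  refine le_antisymm ?_ (hnc x y)
  refine le_of_forall_pos_le_add ?_
  intro ε hε
  obtain ⟨k, hk1, hkx, hky⟩ := almost_periodic hXtb f hnc x y (half_pos hε)
  have h1 : dist (f x) (f y) ≤ dist (f^[k] x) (f^[k] y) := by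
    have := iterate_noncontractive f hnc (k - 1) (f x) (f y)
    rwa [← Function.iterate_succ_apply, ← Function.iterate_succ_apply,
      Nat.succ_eq_add_one, Nat.sub_add_cancel hk1] at this
  have h2 : dist y (f^[k] y) < ε / 2 := by rwa [dist_comm]
  have h3 := dist_triangle4 (f^[k] x) x y (f^[k] y)
  linarith
end

section
/- Let X = [0, 1] ∪ {3} and Y = [0, 1) ∪ {4} as subspaces of ℝ with the standard metric. Then (X, Y) is a strongly plastic pair (every noncontractive map f : X → Y is an isometric embedding) but is not uniformly strongly plastic: for ε = 1/2 and every δ > 0 there is a map f : X → Y with d(f(0), f(3)) > d(0, 3) + ε but d(f(x̃), f(ỹ)) ≥ d(x̃, ỹ) − δ for all x̃, ỹ ∈ X. -/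
theorem example_strongly_plastic_not_uniform :
    (∀ f : (Set.Icc (0 : ℝ) 1 ∪ {3} : Set ℝ) → (Set.Ico (0 : ℝ) 1 ∪ {4} : Set ℝ),
      (∀ x y, dist x y ≤ dist (f x) (f y)) → ∀ x y, dist (f x) (f y) = dist x y) ∧
    (∀ δ : ℝ, 0 < δ →
      ∃ f : (Set.Icc (0 : ℝ) 1 ∪ {3} : Set ℝ) → (Set.Ico (0 : ℝ) 1 ∪ {4} : Set ℝ),
        dist (f ⟨0, by norm_num⟩) (f ⟨3, by norm_num⟩) >
          dist (⟨0, by norm_num⟩ : (Set.Icc (0 : ℝ) 1 ∪ {3} : Set ℝ))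
            (⟨3, by norm_num⟩ : (Set.Icc (0 : ℝ) 1 ∪ {3} : Set ℝ)) + 1 / 2 ∧
        ∀ x y, dist (f x) (f y) ≥ dist x y - δ) := by
  constructor
  · -- In fact, no noncontractive map exists at all.
    intro f hf
    exfalso
    set x0 : (Set.Icc (0 : ℝ) 1 ∪ {3} : Set ℝ) := ⟨0, by norm_num⟩
    set x1 : (Set.Icc (0 : ℝ) 1 ∪ {3} : Set ℝ) := ⟨1, by norm_num⟩
    set x3 : (Set.Icc (0 : ℝ) 1 ∪ {3} : Set ℝ) := ⟨3, by norm_num⟩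
    have h03 := hf x0 x3
    have h13 := hf x1 x3
    have h01 := hf x0 x1
    have d03 : dist x0 x3 = 3 := by rw [Subtype.dist_eq, Real.dist_eq]; norm_num
    have d13 : dist x1 x3 = 2 := by rw [Subtype.dist_eq, Real.dist_eq]; norm_num
    have d01 : dist x0 x1 = 1 := by rw [Subtype.dist_eq, Real.dist_eq]; norm_num
    have hY : ∀ z : (Set.Ico (0 : ℝ) 1 ∪ {4} : Set ℝ),
        (0 ≤ (z : ℝ) ∧ (z : ℝ) < 1) ∨ (z : ℝ) = 4 := by
      rintro ⟨z, hz | hz⟩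
      · exact Or.inl ⟨hz.1, hz.2⟩
      · exact Or.inr hz
    rw [d03] at h03; rw [d13] at h13; rw [d01] at h01
    rw [Subtype.dist_eq, Real.dist_eq] at h03 h13 h01
    rcases hY (f x3) with h3 | h3
    · -- f 3 ∈ [0,1): then f 0 = 4 and f 1 = 4, contradicting h01
      rcases hY (f x0) with h0 | h0
      · rcases abs_cases ((f x0 : ℝ) - (f x3 : ℝ)) with ⟨he, _⟩ | ⟨he, _⟩ <;>
          rw [he] at h03 <;> linarith [h0.1, h0.2, h3.1, h3.2]
      · rcases hY (f x1) with h1 | h1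
        · rcases abs_cases ((f x1 : ℝ) - (f x3 : ℝ)) with ⟨he, _⟩ | ⟨he, _⟩ <;>
            rw [he] at h13 <;> linarith [h1.1, h1.2, h3.1, h3.2]
        · rw [h0, h1] at h01; simp at h01; linarith
    · -- f 3 = 4: then f 0, f 1 ∈ [0,1), contradicting h01
      rcases hY (f x0) with h0 | h0
      · rcases hY (f x1) with h1 | h1
        · rcases abs_cases ((f x0 : ℝ) - (f x1 : ℝ)) with ⟨he, _⟩ | ⟨he, _⟩ <;>
            rw [he] at h01 <;> linarith [h0.1, h0.2, h1.1, h1.2]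
        · rw [h1, h3] at h13; simp at h13; linarith
      · rw [h0, h3] at h03; simp at h03; linarith
  · intro δ hδ
    set t : ℝ := max 0 (1 - δ) with ht
    have ht0 : 0 ≤ t := le_max_left _ _
    have ht1 : t < 1 := by apply max_lt <;> linarith
    have htδ : 1 - δ ≤ t := le_max_right _ _
    have hmem : ∀ x : (Set.Icc (0 : ℝ) 1 ∪ {3} : Set ℝ), (x : ℝ) ≠ 3 →
        0 ≤ (x : ℝ) ∧ (x : ℝ) ≤ 1 := by
      rintro ⟨x, hx | hx⟩ hne
      · exact ⟨hx.1, hx.2⟩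
      · exact absurd hx hne
    refine ⟨fun x => if h : (x : ℝ) = 3 then ⟨4, Or.inr rfl⟩
      else ⟨t * x, Or.inl ⟨mul_nonneg ht0 (hmem x h).1,
        lt_of_le_of_lt (by nlinarith [(hmem x h).1, (hmem x h).2]) ht1⟩⟩, ?_, ?_⟩
    · dsimp only
      rw [dif_neg (by norm_num : ((⟨0, by norm_num⟩ : (Set.Icc (0:ℝ) 1 ∪ {3} : Set ℝ)) : ℝ) ≠ 3),
        dif_pos (by norm_num : ((⟨3, by norm_num⟩ : (Set.Icc (0:ℝ) 1 ∪ {3} : Set ℝ)) : ℝ) = 3)]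
      rw [Subtype.dist_eq, Subtype.dist_eq, Real.dist_eq, Real.dist_eq]
      norm_num
    · intro x y
      dsimp only
      rw [Subtype.dist_eq, Subtype.dist_eq]
      by_cases hx : (x : ℝ) = 3 <;> by_cases hy : (y : ℝ) = 3
      · rw [dif_pos hx, dif_pos hy]
        simp [hx, hy, Real.dist_eq]; linarith
      · rw [dif_pos hx, dif_neg hy]
        obtain ⟨hy0, hy1⟩ := hmem y hy
        simp only [hx, Real.dist_eq]
        rw [abs_of_nonneg (by nlinarith), abs_of_nonneg (by linarith)]
        nlinarith [mul_nonneg (sub_nonneg.2 ht1.le) hy0]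
      · rw [dif_neg hx, dif_pos hy]
        obtain ⟨hx0, hx1⟩ := hmem x hx
        simp only [hy, Real.dist_eq]
        rw [abs_of_nonpos (by nlinarith), abs_of_nonpos (by linarith)]
        nlinarith [mul_nonneg (sub_nonneg.2 ht1.le) hx0]
      · rw [dif_neg hx, dif_neg hy]
        obtain ⟨hx0, hx1⟩ := hmem x hx
        obtain ⟨hy0, hy1⟩ := hmem y hy
        simp only [Real.dist_eq]
        rcases abs_cases ((x : ℝ) - y) with ⟨he, _⟩ | ⟨he, _⟩ <;>
          rcases abs_cases (t * x - t * y) with ⟨he2, h2⟩ | ⟨he2, h2⟩ <;>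
          rw [he, he2] <;> nlinarith
end

section
/- Let X, Y be compact metric spaces such that (X, Y) is a strongly plastic pair, i.e. every noncontractive map f : X → Y is an isometric embedding. Then (X, Y) is uniformly strongly plastic: for every ε > 0 there exists δ > 0 such that for every map f : X → Y, if there are x, y ∈ X with d(f(x), f(y)) > d(x, y) + ε, then there are x̃, ỹ ∈ X with d(f(x̃), f(ỹ)) < d(x̃, ỹ) − δ. -/
/-!
If the theorem failed for some `ε`, there would be maps `F n : X → Y` contracting no distance by
more than `1 / (n + 1)` but expanding some pair `(u n, v n)` by more than `ε`. Along a free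
ultrafilter, the limit points of the graphs of the `F n` form a relation `X → Y → Prop` with full
domain (compactness of `Y`), every selection of which is noncontractive, hence an isometry by
strong plasticity. Since a selection may take any prescribed values at two distinct points, the
relation is itself distance-preserving across distinct points, and single-valued at
non-isolated points. Both contradict the limit `(a, A)`, `(b, B)` of the expanding pairs, for which
`dist a b + ε ≤ dist A B`; if `a = b`, then `a` is not isolated because `u n ≠ v n`.
-/

open Filter Topology

section GraphLimit

variable {ι X Y : Type*}

def IsGraphLimit [TopologicalSpace X] [TopologicalSpace Y] (l : Filter ι) (F : ι → X → Y)
    (a : X) (A : Y) : Prop :=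
  ∃ u : ι → X, Tendsto u l (𝓝 a) ∧ Tendsto (fun i => F i (u i)) l (𝓝 A)

theorem Ultrafilter.exists_tendsto_nhds [TopologicalSpace X] [CompactSpace X]
    (U : Ultrafilter ι) (u : ι → X) : ∃ a, Tendsto u U (𝓝 a) :=
  ⟨(U.map u).lim, by simpa [Tendsto, ← Ultrafilter.coe_map] using (U.map u).le_nhds_lim⟩

theorem exists_isGraphLimit [TopologicalSpace X] [TopologicalSpace Y] [CompactSpace Y]
    (U : Ultrafilter ι) (F : ι → X → Y) (x : X) : ∃ A, IsGraphLimit U F x A :=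
  let ⟨A, hA⟩ := U.exists_tendsto_nhds fun i => F i x
  ⟨A, fun _ => x, tendsto_const_nhds, hA⟩

theorem IsGraphLimit.dist_le [PseudoMetricSpace X] [PseudoMetricSpace Y] {l : Filter ι}
    [l.NeBot] {F : ι → X → Y} {c : ι → ℝ} (hc : Tendsto c l (𝓝 0))
    (hF : ∀ i x y, dist x y - c i ≤ dist (F i x) (F i y)) {a b : X} {A B : Y}
    (ha : IsGraphLimit l F a A) (hb : IsGraphLimit l F b B) : dist a b ≤ dist A B := by
  obtain ⟨u, hu, hA⟩ := ha
  obtain ⟨v, hv, hB⟩ := hb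
  simpa using le_of_tendsto_of_tendsto' ((hu.dist hv).sub hc) (hA.dist hB) fun i => hF i _ _

end GraphLimit

theorem mem_closure_compl_singleton_of_tendsto {ι X : Type*} [TopologicalSpace X] {l : Filter ι}
    [l.NeBot] {u v : ι → X} {a : X} (hu : Tendsto u l (𝓝 a)) (hv : Tendsto v l (𝓝 a))
    (huv : ∀ i, u i ≠ v i) : a ∈ closure {a}ᶜ := by
  rw [closure_compl, Set.mem_compl_iff, mem_interior_iff_mem_nhds]
  intro ha
  obtain ⟨i, hui, hvi⟩ := ((hu.eventually_mem ha).and (hv.eventually_mem ha)).exists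
  exact huv i (hui.trans hvi.symm)

theorem dist_eq_of_forall_selection {X Y : Type*} [PseudoMetricSpace X] [PseudoMetricSpace Y]
    {R : X → Y → Prop} (hR : ∀ x, ∃ y, R x y)
    (hsel : ∀ φ : X → Y, (∀ x, R x (φ x)) → ∀ x y, dist (φ x) (φ y) = dist x y)
    {a b : X} {A B : Y} (ha : R a A) (hb : R b B) (hab : a ≠ b) :
    dist A B = dist a b := by
  classical
  choose φ hφ using hR
  let ψ := Function.update (Function.update φ a A) b B
  have hψ : ∀ x, R x (ψ x) := by
    intro x
    by_cases hxb : x = b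
    · subst hxb; simpa [ψ] using hb
    by_cases hxa : x = a
    · subst hxa; simpa [ψ, hxb] using ha
    simpa [ψ, hxa, hxb] using hφ x
  simpa [ψ, hab] using hsel ψ hψ a b

theorem eq_of_forall_selection {X Y : Type*} [PseudoMetricSpace X] [MetricSpace Y]
    {R : X → Y → Prop} (hR : ∀ x, ∃ y, R x y)
    (hsel : ∀ φ : X → Y, (∀ x, R x (φ x)) → ∀ x y, dist (φ x) (φ y) = dist x y)
    {a : X} {A B : Y} (hA : R a A) (hB : R a B)
    (hacc : a ∈ closure {a}ᶜ) : A = B := by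
  refine dist_le_zero.1 (le_of_forall_pos_le_add fun δ hδ => ?_)
  obtain ⟨z, hza, haz⟩ := Metric.mem_closure_iff.1 hacc (δ / 2) (by positivity)
  obtain ⟨C, hC⟩ := hR z
  calc dist A B ≤ dist A C + dist C B := dist_triangle A C B
    _ = dist a z + dist z a := by
      rw [dist_eq_of_forall_selection hR hsel hA hC (Ne.symm hza),
        dist_eq_of_forall_selection hR hsel hC hB hza]
    _ ≤ 0 + δ := by rw [dist_comm z a]; linarith

theorem compact_strongly_plastic_pair_is_uniform
    (X Y : Type*) [MetricSpace X] [MetricSpace Y]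
    [CompactSpace X] [CompactSpace Y]
    (hsp : ∀ f : X → Y, (∀ x y : X, dist x y ≤ dist (f x) (f y)) →
      ∀ x y : X, dist (f x) (f y) = dist x y) :
    ∀ ε : ℝ, 0 < ε → ∃ δ : ℝ, 0 < δ ∧
      ∀ f : X → Y, (∃ x y : X, dist (f x) (f y) > dist x y + ε) →
        ∃ x y : X, dist (f x) (f y) < dist x y - δ := by
  intro ε hε
  by_contra! h
  choose F hexp hF using fun n : ℕ => h (1 / (n + 1)) Nat.one_div_pos_of_nat
  choose u v huv using hexp
  let U : Ultrafilter ℕ := .of atTop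
  have hc : Tendsto (fun n : ℕ => 1 / ((n : ℝ) + 1)) U (𝓝 0) :=
    tendsto_one_div_add_atTop_nhds_zero_nat.mono_left (Ultrafilter.of_le _)
  have hsel : ∀ φ : X → Y, (∀ x, IsGraphLimit U F x (φ x)) → ∀ x y, dist (φ x) (φ y) = dist x y :=
    fun φ hφ => hsp φ fun x y => (hφ x).dist_le hc hF (hφ y)
  obtain ⟨a, hu⟩ := U.exists_tendsto_nhds u
  obtain ⟨b, hv⟩ := U.exists_tendsto_nhds v
  obtain ⟨A, hA⟩ := U.exists_tendsto_nhds fun n => F n (u n)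
  obtain ⟨B, hB⟩ := U.exists_tendsto_nhds fun n => F n (v n)
  have hAB : dist a b + ε ≤ dist A B :=
    le_of_tendsto_of_tendsto' ((hu.dist hv).add_const ε) (hA.dist hB) fun n => (huv n).le
  rcases eq_or_ne a b with rfl | hab
  · have huv_ne : ∀ n, u n ≠ v n := fun n hn => by
      have := huv n
      rw [hn, dist_self, dist_self] at this
      linarith
    have := eq_of_forall_selection (exists_isGraphLimit U F) hsel ⟨u, hu, hA⟩ ⟨v, hv, hB⟩
      (mem_closure_compl_singleton_of_tendsto hu hv huv_ne)
    rw [this, dist_self, dist_self] at hAB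
    linarith
  · rw [dist_eq_of_forall_selection (exists_isGraphLimit U F) hsel ⟨u, hu, hA⟩ ⟨v, hv, hB⟩ hab]
      at hAB
    linarith
end
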